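/- Let Υ : ℝ → ℝ be a continuous 1-periodic function with ∫₀¹ Υ = μ. Then (√(A/π)) · ∫_{−∞}^{∞} Υ(x) e^(−Ax²) dx → μ as A → 0⁺. -/

import Mathlib

/-!
Write `Υ = μ + φ` with `φ` of mean zero on a period. The primitive `F` of `φ` is then periodic,
hence bounded by some `D`, and integrating by parts against `e(x) = exp (-A x²)` gives
`|∫ φ e| = |∫ F e'| ≤ D ∫ |e'| = 2 D`, whatever `A > 0`. Since `√(A/π) ∫ e = 1`, the normalised
average differs from `μ` by at most `2 D √(A/π) → 0`.
-/

open MeasureTheory Filter Real Topology Function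

theorem Function.Periodic.exists_forall_abs_le {f : ℝ → ℝ} {T : ℝ} (hf : Periodic f T)
    (hT : T ≠ 0) (hc : Continuous f) : ∃ C, ∀ x, |f x| ≤ C := by
  obtain ⟨C, hC⟩ := isBounded_iff_forall_norm_le.mp (hf.isBounded_of_continuous hT hc)
  exact ⟨C, fun x => hC _ (Set.mem_range_self x)⟩

theorem Function.Periodic.periodic_intervalIntegral_of_integral_eq_zero {E : Type*}
    [NormedAddCommGroup E] [NormedSpace ℝ E] {f : ℝ → E} {T : ℝ} (hf : Periodic f T)
    (hint : ∀ t₁ t₂, IntervalIntegrable f volume t₁ t₂) (h₀ : ∫ t in 0..T, f t = 0) :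
    Periodic (fun x => ∫ t in 0..x, f t) T := fun x => by
  simpa [h₀] using hf.intervalIntegral_add_eq_add 0 x hint

theorem hasDerivAt_exp_neg_mul_sq (A x : ℝ) :
    HasDerivAt (fun x => exp (-A * x ^ 2)) (-(2 * A * x) * exp (-A * x ^ 2)) x := by
  convert ((hasDerivAt_pow 2 x).const_mul (-A)).exp using 1
  ring

theorem integral_Ioi_mul_exp_neg_mul_sq {A : ℝ} (hA : 0 < A) :
    ∫ x in Set.Ioi 0, x * exp (-A * x ^ 2) = (2 * A)⁻¹ := by
  have hderiv (x : ℝ) : HasDerivAt (fun y => -(2 * A)⁻¹ * exp (-A * y ^ 2))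
      (x * exp (-A * x ^ 2)) x :=
    ((hasDerivAt_exp_neg_mul_sq A x).const_mul _).congr_deriv (by field_simp)
  have htop : Tendsto (fun y => -(2 * A)⁻¹ * exp (-A * y ^ 2)) atTop (𝓝 0) := by
    simpa using (tendsto_exp_atBot.comp
      ((tendsto_pow_atTop two_ne_zero).const_mul_atTop_of_neg (neg_lt_zero.2 hA))).const_mul
      (-(2 * A)⁻¹)
  rw [integral_Ioi_of_hasDerivAt_of_tendsto' (fun x _ => hderiv x)
    (integrable_mul_exp_neg_mul_sq hA).integrableOn htop]
  simp

theorem integral_abs_mul_exp_neg_mul_sq {A : ℝ} (hA : 0 < A) :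
    ∫ x, |x| * exp (-A * x ^ 2) = A⁻¹ := by
  have h (x : ℝ) : |x| * exp (-A * x ^ 2) = |x| * exp (-A * |x| ^ 2) := by rw [sq_abs]
  rw [integral_congr_ae (ae_of_all _ h), integral_comp_abs (f := fun x => x * exp (-A * x ^ 2)),
    integral_Ioi_mul_exp_neg_mul_sq hA]
  field_simp

theorem abs_integral_mul_exp_neg_mul_sq_le {f F : ℝ → ℝ} {A D : ℝ} (hA : 0 < A)
    (hF : ∀ x, HasDerivAt F (f x) x) (hFD : ∀ x, |F x| ≤ D)
    (hf : Integrable fun x => f x * exp (-A * x ^ 2)) :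
    |∫ x, f x * exp (-A * x ^ 2)| ≤ 2 * D := by
  have hFc : Continuous F := continuous_iff_continuousAt.2 fun x => (hF x).continuousAt
  have hFe : Integrable fun x => F x * exp (-A * x ^ 2) :=
    (integrable_exp_neg_mul_sq hA).bdd_mul hFc.aestronglyMeasurable (ae_of_all _ hFD)
  have hFe' : Integrable fun x => F x * (-(2 * A * x) * exp (-A * x ^ 2)) := by
    have := ((integrable_mul_exp_neg_mul_sq hA).const_mul (-(2 * A))).bdd_mul
      hFc.aestronglyMeasurable (ae_of_all _ hFD)
    convert this using 3; ring
  have hibp : ∫ x, F x * (-(2 * A * x) * exp (-A * x ^ 2)) = -∫ x, f x * exp (-A * x ^ 2) :=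
    integral_mul_deriv_eq_deriv_mul_of_integrable (fun x _ => hF x)
      (fun x _ => hasDerivAt_exp_neg_mul_sq A x) hFe' hf hFe
  have hxe : Integrable fun x => |x| * exp (-A * x ^ 2) := by
    simpa only [abs_mul, abs_of_pos (exp_pos _)] using (integrable_mul_exp_neg_mul_sq hA).abs
  have hbound (x : ℝ) : ‖F x * (-(2 * A * x) * exp (-A * x ^ 2))‖
      ≤ 2 * A * D * (|x| * exp (-A * x ^ 2)) := by
    rw [norm_mul, norm_mul, norm_neg, Real.norm_eq_abs, Real.norm_eq_abs, Real.norm_eq_abs,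
      abs_mul, abs_mul, abs_of_pos hA, abs_two, abs_of_pos (exp_pos _)]
    calc |F x| * (2 * A * |x| * exp (-A * x ^ 2)) ≤ D * (2 * A * |x| * exp (-A * x ^ 2)) := by
          gcongr; exact hFD x
      _ = 2 * A * D * (|x| * exp (-A * x ^ 2)) := by ring
  calc |∫ x, f x * exp (-A * x ^ 2)|
      = ‖∫ x, F x * (-(2 * A * x) * exp (-A * x ^ 2))‖ := by rw [hibp, norm_neg, Real.norm_eq_abs]
    _ ≤ ∫ x, 2 * A * D * (|x| * exp (-A * x ^ 2)) :=
      norm_integral_le_of_norm_le (hxe.const_mul _) (ae_of_all _ hbound)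
    _ = 2 * D := by rw [integral_const_mul, integral_abs_mul_exp_neg_mul_sq hA]; field_simp

theorem tendsto_sqrt_mul_integral_mul_exp_neg_mul_sq_of_bounded_primitive {Υ F : ℝ → ℝ}
    {μ D : ℝ} (hF : ∀ x, HasDerivAt F (Υ x - μ) x) (hFD : ∀ x, |F x| ≤ D)
    (hΥ : ∀ A > 0, Integrable fun x => Υ x * exp (-A * x ^ 2)) :
    Tendsto (fun A => √(A / π) * ∫ x, Υ x * exp (-A * x ^ 2)) (𝓝[>] 0) (𝓝 μ) := by
  have hdist (A : ℝ) (hA : 0 < A) :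
      dist (√(A / π) * ∫ x, Υ x * exp (-A * x ^ 2)) μ ≤ 2 * D * √(A / π) := by
    have hμe := (integrable_exp_neg_mul_sq hA).const_mul μ
    have hφe : Integrable fun x => (Υ x - μ) * exp (-A * x ^ 2) :=
      ((hΥ A hA).sub hμe).congr (ae_of_all _ fun x => (sub_mul ..).symm)
    have hsplit : ∫ x, Υ x * exp (-A * x ^ 2)
        = (∫ x, (Υ x - μ) * exp (-A * x ^ 2)) + μ * √(π / A) := by
      simp_rw [sub_mul]
      rw [integral_sub (hΥ A hA) hμe, integral_const_mul, integral_gaussian]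
      ring
    have hsqrt : √(A / π) * √(π / A) = 1 := by
      rw [← sqrt_mul (by positivity), show A / π * (π / A) = 1 by field_simp, sqrt_one]
    have hdiff : √(A / π) * (∫ x, Υ x * exp (-A * x ^ 2)) - μ
        = √(A / π) * ∫ x, (Υ x - μ) * exp (-A * x ^ 2) := by
      rw [hsplit, mul_add, mul_left_comm, hsqrt]
      ring
    rw [dist_eq, hdiff, abs_mul, abs_of_nonneg (sqrt_nonneg _), mul_comm (2 * D)]
    gcongr
    exact abs_integral_mul_exp_neg_mul_sq_le hA hF hFD hφe
  have hbound : Tendsto (fun A => 2 * D * √(A / π)) (𝓝[>] 0) (𝓝 0) := by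
    have : ContinuousAt (fun A => 2 * D * √(A / π)) 0 := by fun_prop
    simpa using this.tendsto.mono_left nhdsWithin_le_nhds
  rw [tendsto_iff_dist_tendsto_zero]
  refine squeeze_zero' (Eventually.of_forall fun _ => dist_nonneg) ?_ hbound
  filter_upwards [self_mem_nhdsWithin] with A hA using hdist A hA

theorem stmt_16 (Υ : ℝ → ℝ) (hcont : Continuous Υ)
    (hper : ∀ x : ℝ, Υ (x + 1) = Υ x)
    (μ : ℝ) (hμ : μ = ∫ x in (0 : ℝ)..1, Υ x) :
    Tendsto (fun A : ℝ => Real.sqrt (A / Real.pi) * ∫ x : ℝ, Υ x * Real.exp (-A * x ^ 2))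
      (nhdsWithin 0 (Set.Ioi 0)) (nhds μ) := by
  have hφ : Continuous fun x => Υ x - μ := hcont.sub continuous_const
  have hφper : Periodic (fun x => Υ x - μ) 1 := fun x => by simp only [hper x]
  have hmean : ∫ x in (0 : ℝ)..1, (Υ x - μ) = 0 := by
    rw [intervalIntegral.integral_sub (hcont.intervalIntegrable _ _) intervalIntegrable_const, ← hμ]
    simp
  obtain ⟨D, hD⟩ := (hφper.periodic_intervalIntegral_of_integral_eq_zero
    (fun _ _ => hφ.intervalIntegrable _ _) hmean).exists_forall_abs_le one_ne_zero
    (intervalIntegral.continuous_primitive (fun _ _ => hφ.intervalIntegrable _ _) 0)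
  obtain ⟨C, hC⟩ := (show Periodic Υ 1 from hper).exists_forall_abs_le one_ne_zero hcont
  exact tendsto_sqrt_mul_integral_mul_exp_neg_mul_sq_of_bounded_primitive
    (fun x => (hφ.integral_hasStrictDerivAt 0 x).hasDerivAt) hD
    fun A hA => (integrable_exp_neg_mul_sq hA).bdd_mul hcont.aestronglyMeasurable (ae_of_all _ hC)
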